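/- arXiv:1608.06067 — 3 statements merged into one kernel-verified Lean document; each statement's English description precedes it below -/
import Mathlib

section
/- For every real α > 2 and every ε > 0, the function g_ε(x)² = 1/(ε + |x|^α)² on ℝ² is Lebesgue integrable and ∫_{ℝ²} g_ε(x)² dx = (2π²(α−2)/α²)·ε^{(2−2α)/α}·csc(2π/α). (This evaluates the integral ∫ g_ε² appearing in the denominator of the interference correlation coefficient of Theorem 1.) -/
open MeasureTheory Real

/-- The regularized path-loss function `g_ε(x) = 1/(ε + |x|^α)` on `ℝ²`. -/
noncomputable def gE (ε α : ℝ) (x : EuclideanSpace ℝ (Fin 2)) : ℝ :=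
  1 / (ε + ‖x‖ ^ α)

/-!
Integrability: `(ε + t^α)⁻¹ ≲ (1 + t)^(-α)`, and `(1 + ‖x‖)^(-2α)` is integrable on `ℝ²` since
`2 < 2α`. Value: in polar coordinates the integral is `2π ∫₀^∞ r / (ε + r^α)² dr`; the
substitution `r^α = ε u` turns this into a multiple of `∫₀^∞ u^(p-1) / (1 + u)² du` with
`p = 2/α`, which `u = t / (1 - t)` identifies with the Beta integral `B(p, 2 - p)`, and
`Γ(p) Γ(2 - p) = (1 - p) π / sin (π p)` by the reflection formula.
-/

open Set

theorem one_add_rpow_le_mul_add_rpow {α ε t : ℝ} (hα : 0 ≤ α) (hε : 0 < ε) (ht : 0 ≤ t) :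
    (1 + t) ^ α ≤ 2 ^ α / min ε 1 * (ε + t ^ α) := by
  have hmax : max 1 t ^ α ≤ 1 + t ^ α := by
    rcases le_total 1 t with h | h
    · rw [max_eq_right h]; linarith
    · rw [max_eq_left h, one_rpow]; linarith [rpow_nonneg ht α]
  have hmin : min ε 1 * (1 + t ^ α) ≤ ε + t ^ α := by
    nlinarith [min_le_left ε 1, min_le_right ε 1, rpow_nonneg ht α]
  calc (1 + t) ^ α ≤ (2 * max 1 t) ^ α := by
        gcongr; linarith [le_max_left 1 t, le_max_right 1 t]
    _ = 2 ^ α * max 1 t ^ α := mul_rpow zero_le_two (by positivity)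
    _ ≤ 2 ^ α * (1 + t ^ α) := by gcongr
    _ ≤ 2 ^ α / min ε 1 * (ε + t ^ α) := by
        rw [div_mul_eq_mul_div, mul_div_assoc]
        gcongr
        rwa [le_div_iff₀' (lt_min hε one_pos)]

theorem integrable_one_div_add_norm_rpow_sq {E : Type*} [NormedAddCommGroup E] [NormedSpace ℝ E]
    [FiniteDimensional ℝ E] [MeasurableSpace E] [BorelSpace E] (μ : Measure E)
    [μ.IsAddHaarMeasure] {α ε : ℝ} (hε : 0 < ε) (hdim : (Module.finrank ℝ E : ℝ) < 2 * α) :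
    Integrable (fun x => (1 / (ε + ‖x‖ ^ α)) ^ 2) μ := by
  have hα : 0 ≤ α := by linarith [(Nat.cast_nonneg (Module.finrank ℝ E) : (0 : ℝ) ≤ _)]
  set C := 2 ^ α / min ε 1
  have hC : 0 < C := by positivity
  refine ((integrable_one_add_norm hdim).const_mul (C ^ 2)).mono'
    (Measurable.aestronglyMeasurable (by fun_prop)) (ae_of_all _ fun x => ?_)
  have hbound := one_add_rpow_le_mul_add_rpow hα hε (norm_nonneg x)
  have hdecay : (1 + ‖x‖) ^ (-(2 * α)) = 1 / ((1 + ‖x‖) ^ α) ^ 2 := by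
    rw [rpow_neg (by positivity), mul_comm 2 α, rpow_mul (by positivity), rpow_two, one_div]
  rw [norm_of_nonneg (by positivity), hdecay, div_pow, one_pow]
  calc 1 / (ε + ‖x‖ ^ α) ^ 2 = C ^ 2 / (C * (ε + ‖x‖ ^ α)) ^ 2 := by field_simp
    _ ≤ C ^ 2 * (1 / ((1 + ‖x‖) ^ α) ^ 2) := by rw [mul_one_div]; gcongr

theorem integral_Ioo_rpow_mul_one_sub_rpow {a b : ℝ} (ha : 0 < a) (hb : 0 < b) :
    ∫ t in Ioo (0 : ℝ) 1, t ^ (a - 1) * (1 - t) ^ (b - 1) = Gamma a * Gamma b / Gamma (a + b) := by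
  have hbeta : Complex.betaIntegral a b
      = ↑(∫ t in Ioo (0 : ℝ) 1, t ^ (a - 1) * (1 - t) ^ (b - 1)) := by
    rw [Complex.betaIntegral, intervalIntegral.integral_of_le zero_le_one,
      integral_Ioc_eq_integral_Ioo, ← integral_complex_ofReal]
    refine setIntegral_congr_fun measurableSet_Ioo fun t ⟨ht0, ht1⟩ => ?_
    rw [Complex.ofReal_mul, Complex.ofReal_cpow ht0.le, Complex.ofReal_cpow (sub_nonneg.2 ht1.le)]
    push_cast
    rfl
  have := Complex.betaIntegral_eq_Gamma_mul_div a b (by simpa) (by simpa)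
  rw [hbeta, ← Complex.ofReal_add, Complex.Gamma_ofReal, Complex.Gamma_ofReal,
    Complex.Gamma_ofReal] at this
  exact_mod_cast this

theorem integral_Ioi_rpow_div_one_add_rpow {a b : ℝ} (ha : 0 < a) (hb : 0 < b) :
    ∫ u in Ioi (0 : ℝ), u ^ (a - 1) / (1 + u) ^ (a + b) = Gamma a * Gamma b / Gamma (a + b) := by
  have hderiv : ∀ t ∈ Ioo (0 : ℝ) 1,
      HasDerivWithinAt (fun t => t / (1 - t)) ((1 - t) ^ 2)⁻¹ (Ioo 0 1) t := by
    intro t ht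
    have h1t : 1 - t ≠ 0 := (sub_pos.2 ht.2).ne'
    refine (((hasDerivAt_id' t).div ((hasDerivAt_id' t).const_sub 1) h1t)
      |>.hasDerivWithinAt).congr_deriv ?_
    field_simp
    ring
  have hinj : InjOn (fun t : ℝ => t / (1 - t)) (Ioo 0 1) := by
    intro s hs t ht hst
    have := (sub_pos.2 hs.2).ne'
    have := (sub_pos.2 ht.2).ne'
    field_simp at hst
    linarith
  have himage : (fun t : ℝ => t / (1 - t)) '' Ioo 0 1 = Ioi 0 := by
    refine Subset.antisymm (image_subset_iff.2 fun t ht => div_pos ht.1 (sub_pos.2 ht.2)) ?_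
    intro u (hu : 0 < u)
    refine ⟨u / (1 + u), ⟨by positivity, (div_lt_one (by positivity)).2 (by linarith)⟩, ?_⟩
    field_simp
    ring
  rw [← integral_Ioo_rpow_mul_one_sub_rpow ha hb, ← himage,
    integral_image_eq_integral_abs_deriv_smul measurableSet_Ioo hderiv hinj]
  refine setIntegral_congr_fun measurableSet_Ioo fun t ⟨ht0, ht1⟩ => ?_
  have h1t : 0 < 1 - t := sub_pos.2 ht1
  have hsum : 1 + t / (1 - t) = (1 - t)⁻¹ := by field_simp; ring
  rw [smul_eq_mul, hsum, abs_of_pos (by positivity), div_rpow ht0.le h1t.le, inv_rpow h1t.le,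
    div_eq_mul_inv, div_eq_mul_inv, inv_inv, ← rpow_neg h1t.le, ← rpow_natCast, ← rpow_neg h1t.le]
  rw [mul_comm, mul_assoc, mul_assoc, ← rpow_add h1t, ← rpow_add h1t]
  congr 2
  push_cast
  ring

theorem integral_Ioi_rpow_div_add_sq {p ε : ℝ} (hp0 : 0 < p) (hp1 : p < 1) (hε : 0 < ε) :
    ∫ u in Ioi (0 : ℝ), u ^ (p - 1) / (ε + u) ^ 2 = ε ^ (p - 2) * ((1 - p) * π / sin (π * p)) := by
  have hGamma : Gamma p * Gamma (2 - p) / Gamma (p + (2 - p)) = (1 - p) * π / sin (π * p) := by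
    rw [add_sub_cancel, show (2 : ℝ) = 1 + 1 by norm_num, Gamma_add_one one_ne_zero, Gamma_one,
      show 1 + 1 - p = (1 - p) + 1 by ring, Gamma_add_one (sub_ne_zero.2 hp1.ne')]
    rw [mul_div_assoc (1 - p), ← Gamma_mul_Gamma_one_sub]
    ring
  have hscale : ∀ u ∈ Ioi (0 : ℝ), (ε * u) ^ (p - 1) / (ε + ε * u) ^ 2
      = ε ^ (p - 2) * ε⁻¹ * (u ^ (p - 1) / (1 + u) ^ (p + (2 - p))) := by
    intro u (hu : 0 < u)
    rw [add_sub_cancel, rpow_two, mul_rpow hε.le hu.le, show ε + ε * u = ε * (1 + u) by ring,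
      mul_pow, rpow_sub hε, rpow_sub hε, rpow_one, rpow_two]
    field_simp
  have := integral_comp_mul_left_Ioi (fun u => u ^ (p - 1) / (ε + u) ^ 2) 0 hε
  rw [mul_zero, setIntegral_congr_fun measurableSet_Ioi hscale, integral_const_mul,
    integral_Ioi_rpow_div_one_add_rpow hp0 (by linarith), hGamma, smul_eq_mul] at this
  rw [← mul_right_inj' (inv_ne_zero hε.ne'), ← this]
  ring

theorem integral_Ioi_rpow_div_add_rpow_sq {q α ε : ℝ} (hq : 0 < q) (hqα : q < α) (hε : 0 < ε) :
    ∫ r in Ioi (0 : ℝ), r ^ (q - 1) / (ε + r ^ α) ^ 2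
      = α⁻¹ * (ε ^ (q / α - 2) * ((1 - q / α) * π / sin (π * (q / α)))) := by
  have hα : 0 < α := hq.trans hqα
  have hsubst : ∀ r ∈ Ioi (0 : ℝ), r ^ (q - 1) / (ε + r ^ α) ^ 2
      = (α * r ^ (α - 1)) • (α⁻¹ * ((r ^ α) ^ (q / α - 1) / (ε + r ^ α) ^ 2)) := by
    intro r (hr : 0 < r)
    rw [← rpow_mul hr.le, smul_eq_mul, show q - 1 = (α - 1) + α * (q / α - 1) by field_simp; ring,
      rpow_add hr]
    field_simp
  rw [setIntegral_congr_fun measurableSet_Ioi hsubst,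
    integral_comp_rpow_Ioi_of_pos (g := fun v => α⁻¹ * (v ^ (q / α - 1) / (ε + v) ^ 2)) hα,
    integral_const_mul, integral_Ioi_rpow_div_add_sq (by positivity) ((div_lt_one hα).2 hqα) hε]

theorem integral_fun_norm_euclideanSpace_fin_two {F : Type*} [NormedAddCommGroup F]
    [NormedSpace ℝ F] (f : ℝ → F) :
    ∫ x : EuclideanSpace ℝ (Fin 2), f ‖x‖ = (2 * π) • ∫ r in Ioi (0 : ℝ), r • f r := by
  rw [integral_fun_norm_addHaar, finrank_euclideanSpace_fin, measureReal_def,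
    EuclideanSpace.volume_ball_fin_two]
  norm_num [ENNReal.toReal_ofReal pi_nonneg, mul_smul, ofNat_smul_eq_nsmul (R := ℝ)]

theorem stmt6 (α ε : ℝ) (hα : 2 < α) (hε : 0 < ε) :
    Integrable (fun x : EuclideanSpace ℝ (Fin 2) => (gE ε α x) ^ 2) volume ∧
    (∫ x : EuclideanSpace ℝ (Fin 2), (gE ε α x) ^ 2)
      = (2 * π ^ 2 * (α - 2) / α ^ 2) * ε ^ ((2 - 2 * α) / α) * (1 / Real.sin (2 * π / α)) := by
  have hdim : (Module.finrank ℝ (EuclideanSpace ℝ (Fin 2)) : ℝ) < 2 * α := by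
    rw [finrank_euclideanSpace_fin]; push_cast; linarith
  refine ⟨integrable_one_div_add_norm_rpow_sq volume hε hdim, ?_⟩
  have hradial : ∫ r in Ioi (0 : ℝ), r • (1 / (ε + r ^ α)) ^ 2
      = ∫ r in Ioi (0 : ℝ), r ^ ((2 : ℝ) - 1) / (ε + r ^ α) ^ 2 := by
    refine setIntegral_congr_fun measurableSet_Ioi fun r _ => ?_
    rw [smul_eq_mul, show (2 : ℝ) - 1 = 1 by norm_num, rpow_one, div_pow, one_pow, mul_one_div]
  have hexp : (2 - 2 * α) / α = 2 / α - 2 := by field_simp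
  have hsin : π * (2 / α) = 2 * π / α := by ring
  simp only [gE]
  rw [integral_fun_norm_euclideanSpace_fin_two (fun r => (1 / (ε + r ^ α)) ^ 2), hradial,
    integral_Ioi_rpow_div_add_rpow_sq two_pos hα hε, hexp, hsin, smul_eq_mul]
  field_simp
end

section
/- For every c > 0, R > 0, ε > 0 and α > 2, F_ε(c,R) ≤ (c/(πR²))·(∫_{ℝ²} g_ε(x) dx)². In particular, for any sequences (c_k) and (R_k) of positive reals with c_k/R_k² → 0, one has F_ε(c_k, R_k) → 0. (This bound yields the convergence ζ_M → ζ_P claimed in Proposition 2 when c/R² → 0.) -/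
open MeasureTheory Real Filter

/-- The lens-area function `A_R(r)`. -/
noncomputable def lensArea (R r : ℝ) : ℝ :=
  if r ≤ 2 * R then 2 * R ^ 2 * Real.arccos (r / (2 * R)) - r * Real.sqrt (R ^ 2 - r ^ 2 / 4)
  else 0

/-- The quantity `F_ε(c, R)`. -/
noncomputable def Feps (ε α c R : ℝ) : ℝ :=
  (c / (π ^ 2 * R ^ 4)) *
    ∫ x : EuclideanSpace ℝ (Fin 2), ∫ y : EuclideanSpace ℝ (Fin 2),
      gE ε α x * gE ε α y * lensArea R ‖x - y‖

/-!
The lens area satisfies `0 ≤ A_R(r) ≤ π R²` (a lens is contained in either of its discs), so the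
double integral is at most `π R² (∫ g_ε)²`, which is finite because `g_ε` decays like `|x|^(-α)`
with `α > 2 = dim ℝ²`. The limit statement follows by squeezing.
-/

lemma lensArea_nonneg {R : ℝ} (hR : 0 < R) (r : ℝ) : 0 ≤ lensArea R r := by
  unfold lensArea
  split_ifs with h
  · set t := r / (2 * R) with ht
    have hr_eq : r = 2 * R * t := by rw [ht]; field_simp
    have ht1 : t ≤ 1 := (div_le_one (by positivity)).2 h
    have hsqrt : √(R ^ 2 - r ^ 2 / 4) = R * √(1 - t ^ 2) := by
      rw [hr_eq, show R ^ 2 - (2 * R * t) ^ 2 / 4 = R ^ 2 * (1 - t ^ 2) by ring,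
        Real.sqrt_mul (sq_nonneg R), Real.sqrt_sq hR.le]
    have hsin : √(1 - t ^ 2) ≤ Real.arccos t := by
      simpa [Real.sin_arccos] using Real.sin_le (Real.arccos_nonneg t)
    have hkey : t * √(1 - t ^ 2) ≤ Real.arccos t :=
      (mul_le_of_le_one_left (Real.sqrt_nonneg _) ht1).trans hsin
    rw [hsqrt, hr_eq]
    nlinarith [mul_le_mul_of_nonneg_left hkey (by positivity : (0 : ℝ) ≤ 2 * R ^ 2)]
  · exact le_rfl

lemma lensArea_le_pi_mul_sq {R r : ℝ} (hR : 0 < R) (hr : 0 ≤ r) : lensArea R r ≤ π * R ^ 2 := by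
  unfold lensArea
  split_ifs
  · have harccos : Real.arccos (r / (2 * R)) ≤ π / 2 :=
      Real.arccos_le_pi_div_two.2 (by positivity)
    nlinarith [mul_nonneg hr (Real.sqrt_nonneg (R ^ 2 - r ^ 2 / 4)), sq_nonneg R]
  · positivity

lemma one_add_rpow_le_two_rpow_mul {t p : ℝ} (ht : 0 ≤ t) (hp : 0 ≤ p) :
    (1 + t) ^ p ≤ 2 ^ p * (1 + t ^ p) := by
  have htp : 0 ≤ t ^ p := Real.rpow_nonneg ht p
  rcases le_total t 1 with h | h
  · calc (1 + t) ^ p ≤ 2 ^ p := by gcongr; linarith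
      _ ≤ 2 ^ p * (1 + t ^ p) := le_mul_of_one_le_right (by positivity) (by linarith)
  · calc (1 + t) ^ p ≤ (2 * t) ^ p := by gcongr; linarith
      _ = 2 ^ p * t ^ p := Real.mul_rpow zero_le_two ht
      _ ≤ 2 ^ p * (1 + t ^ p) := by gcongr; linarith

lemma integrable_one_div_add_norm_rpow {E : Type*} [NormedAddCommGroup E] [NormedSpace ℝ E]
    [FiniteDimensional ℝ E] [MeasurableSpace E] [BorelSpace E] (μ : Measure E) [μ.IsAddHaarMeasure]
    {ε α : ℝ} (hε : 0 < ε) (hα : (Module.finrank ℝ E : ℝ) < α) :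
    Integrable (fun x : E => 1 / (ε + ‖x‖ ^ α)) μ := by
  have hα0 : 0 ≤ α := (Nat.cast_nonneg _).trans hα.le
  have hm : 0 < min ε 1 := lt_min hε one_pos
  refine ((integrable_one_add_norm hα).const_mul (2 ^ α / min ε 1)).mono'
    (Measurable.aestronglyMeasurable (by fun_prop)) (ae_of_all _ fun x => ?_)
  have hxα : 0 ≤ ‖x‖ ^ α := Real.rpow_nonneg (norm_nonneg x) α
  have hbound : min ε 1 * (1 + ‖x‖) ^ α ≤ 2 ^ α * (ε + ‖x‖ ^ α) := calc
    min ε 1 * (1 + ‖x‖) ^ α ≤ min ε 1 * (2 ^ α * (1 + ‖x‖ ^ α)) :=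
      mul_le_mul_of_nonneg_left (one_add_rpow_le_two_rpow_mul (norm_nonneg x) hα0) hm.le
    _ = 2 ^ α * (min ε 1 + min ε 1 * ‖x‖ ^ α) := by ring
    _ ≤ 2 ^ α * (ε + ‖x‖ ^ α) := by
      gcongr
      · exact min_le_left _ _
      · exact mul_le_of_le_one_left hxα (min_le_right _ _)
  rw [Real.norm_of_nonneg (by positivity), Real.rpow_neg (by positivity), ← div_eq_mul_inv,
    div_div, div_le_div_iff₀ (by positivity) (by positivity), one_mul]
  exact hbound

lemma integral_integral_mul_mul_le {X Y : Type*} [MeasurableSpace X] [MeasurableSpace Y]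
    {μ : Measure X} {ν : Measure Y} {f : X → ℝ} {g : Y → ℝ} {K : X → Y → ℝ} {M : ℝ}
    (hf₀ : 0 ≤ f) (hg₀ : 0 ≤ g) (hf : Integrable f μ) (hg : Integrable g ν)
    (hK₀ : ∀ x y, 0 ≤ K x y) (hKM : ∀ x y, K x y ≤ M) :
    ∫ x, ∫ y, f x * g y * K x y ∂ν ∂μ ≤ M * (∫ x, f x ∂μ) * ∫ y, g y ∂ν := by
  have hnonneg : ∀ x y, 0 ≤ f x * g y * K x y := fun x y =>
    mul_nonneg (mul_nonneg (hf₀ x) (hg₀ y)) (hK₀ x y)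
  have hinner : ∀ x, ∫ y, f x * g y * K x y ∂ν ≤ f x * M * ∫ y, g y ∂ν := fun x => by
    rw [← integral_const_mul]
    refine integral_mono_of_nonneg (ae_of_all _ (hnonneg x)) (hg.const_mul _)
      (ae_of_all _ fun y => ?_)
    calc f x * g y * K x y ≤ f x * g y * M :=
          mul_le_mul_of_nonneg_left (hKM x y) (mul_nonneg (hf₀ x) (hg₀ y))
      _ = f x * M * g y := by ring
  calc ∫ x, ∫ y, f x * g y * K x y ∂ν ∂μ ≤ ∫ x, (M * ∫ y, g y ∂ν) * f x ∂μ :=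
        integral_mono_of_nonneg (ae_of_all _ fun x => integral_nonneg (hnonneg x))
          (hf.const_mul _) (ae_of_all _ fun x => (hinner x).trans_eq (by ring))
    _ = M * (∫ x, f x ∂μ) * ∫ y, g y ∂ν := by rw [integral_const_mul]; ring

lemma gE_nonneg {ε : ℝ} (hε : 0 ≤ ε) (α : ℝ) : 0 ≤ gE ε α := fun x => by
  unfold gE
  have := Real.rpow_nonneg (norm_nonneg x) α
  positivity

lemma integrable_gE {ε α : ℝ} (hε : 0 < ε) (hα : 2 < α) : Integrable (gE ε α) :=
  integrable_one_div_add_norm_rpow volume hε (by simpa using hα)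

lemma Feps_nonneg {ε c R : ℝ} (hε : 0 ≤ ε) (α : ℝ) (hc : 0 ≤ c) (hR : 0 < R) :
    0 ≤ Feps ε α c R :=
  mul_nonneg (by positivity) <| integral_nonneg fun x => integral_nonneg fun y =>
    mul_nonneg (mul_nonneg (gE_nonneg hε α x) (gE_nonneg hε α y))
      (lensArea_nonneg hR _)

lemma Feps_le {ε α c R : ℝ} (hε : 0 < ε) (hα : 2 < α) (hc : 0 ≤ c) (hR : 0 < R) :
    Feps ε α c R ≤ (c / (π * R ^ 2)) * (∫ x : EuclideanSpace ℝ (Fin 2), gE ε α x) ^ 2 := by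
  have hdouble := integral_integral_mul_mul_le (μ := volume) (ν := volume)
    (gE_nonneg hε.le α) (gE_nonneg hε.le α) (integrable_gE hε hα) (integrable_gE hε hα)
    (fun x y => lensArea_nonneg hR ‖x - y‖)
    (fun x y => lensArea_le_pi_mul_sq hR (norm_nonneg (x - y)))
  calc Feps ε α c R ≤ c / (π ^ 2 * R ^ 4) *
        (π * R ^ 2 * (∫ x, gE ε α x) * ∫ y, gE ε α y) :=
        mul_le_mul_of_nonneg_left hdouble (by positivity)
    _ = (c / (π * R ^ 2)) * (∫ x, gE ε α x) ^ 2 := by field_simp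

theorem stmt8 (ε α : ℝ) (hε : 0 < ε) (hα : 2 < α) :
    (∀ c R : ℝ, 0 < c → 0 < R →
      Feps ε α c R ≤ (c / (π * R ^ 2)) * (∫ x : EuclideanSpace ℝ (Fin 2), gE ε α x) ^ 2) ∧
    (∀ c R : ℕ → ℝ, (∀ k, 0 < c k) → (∀ k, 0 < R k) →
      Tendsto (fun k => c k / (R k) ^ 2) atTop (nhds 0) →
      Tendsto (fun k => Feps ε α (c k) (R k)) atTop (nhds 0)) := by
  refine ⟨fun c R hc hR => Feps_le hε hα hc.le hR, fun c R hc hR hlim => ?_⟩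
  set I := ∫ x : EuclideanSpace ℝ (Fin 2), gE ε α x
  have hupper : ∀ k, Feps ε α (c k) (R k) ≤ c k / R k ^ 2 * (I ^ 2 / π) := fun k =>
    (Feps_le hε hα (hc k).le (hR k)).trans_eq (by ring)
  exact squeeze_zero (fun k => Feps_nonneg hε.le α (hc k).le (hR k)) hupper
    (by simpa using hlim.mul_const (I ^ 2 / π))
end

section
/- (Interference integral behind the constant U_n in Lemma 6) Let α > 2, set δ = 2/α, let θ > 0 and let n ≥ 1 be an integer. Then 2π·∫₀^∞ (1 − (1 + θ·t^{−α})^{−n})·t dt = θ^{δ}·U_n, where U_n = (π²δ/sin(πδ))·Γ(n + δ)/(Γ(n)·Γ(1 + δ)); equivalently the integral equals π·θ^{δ}·Γ(1 − δ)·Γ(n + δ)/Γ(n). -/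
/-!
The substitution `u = θ t^(-α)` turns the integral into
`(θ^δ / α) ∫₀^∞ (1 - (1 + u)^(-n)) u^(-δ-1) du`. Telescoping
`1 - (1 + u)^(-n) = ∑_{k<n} u (1 + u)^(-(k+1))` splits this into Beta integrals of the second kind
`∫₀^∞ u^(-δ) (1 + u)^(-(k+1)) du = Γ(1-δ) Γ(k+δ) / Γ(k+1)`, which `x ↦ x / (1 - x)` reduces to
Euler's Beta integral; the resulting sum `∑_{k<n} Γ(k+δ) / Γ(k+1) = Γ(n+δ) / (δ Γ(n))` telescopes
too. The form with `sin (π δ)` is Euler's reflection formula.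
-/

open MeasureTheory Real Set

lemma hasDerivAt_div_one_sub {x : ℝ} (hx : x ≠ 1) :
    HasDerivAt (fun y => y / (1 - y)) ((1 - x) ^ 2)⁻¹ x := by
  exact ((hasDerivAt_id' x).fun_div ((hasDerivAt_id' x).const_sub 1)
    (sub_ne_zero.2 hx.symm)).congr_deriv (by ring)

lemma injOn_div_one_sub : InjOn (fun x : ℝ => x / (1 - x)) {1}ᶜ := by
  intro x hx y hy hxy
  have hx' : 1 - x ≠ 0 := sub_ne_zero.2 (Ne.symm hx)
  have hy' : 1 - y ≠ 0 := sub_ne_zero.2 (Ne.symm hy)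
  rw [div_eq_div_iff hx' hy'] at hxy
  linarith

lemma image_div_one_sub_Ioo : (fun x : ℝ => x / (1 - x)) '' Ioo 0 1 = Ioi 0 := by
  ext v
  constructor
  · rintro ⟨x, ⟨hx0, hx1⟩, rfl⟩
    exact div_pos hx0 (sub_pos.2 hx1)
  · intro (hv : 0 < v)
    refine ⟨v / (1 + v), ⟨by positivity, (div_lt_one (by positivity)).2 (by linarith)⟩, ?_⟩
    field_simp
    ring

section BetaIntegral

variable {a b : ℝ}

lemma ofReal_rpow_mul_one_sub_rpow {x : ℝ} (hx : x ∈ Icc (0 : ℝ) 1) :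
    ((x ^ (a - 1) * (1 - x) ^ (b - 1) : ℝ) : ℂ)
      = (x : ℂ) ^ ((a : ℂ) - 1) * (1 - (x : ℂ)) ^ ((b : ℂ) - 1) := by
  rw [Complex.ofReal_mul, Complex.ofReal_cpow hx.1, Complex.ofReal_cpow (sub_nonneg.2 hx.2)]
  push_cast
  rfl

lemma integrableOn_rpow_mul_one_sub_rpow (ha : 0 < a) (hb : 0 < b) :
    IntegrableOn (fun x : ℝ => x ^ (a - 1) * (1 - x) ^ (b - 1)) (Ioo 0 1) := by
  have hC := (intervalIntegrable_iff_integrableOn_Ioc_of_le zero_le_one).1 <|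
    Complex.betaIntegral_convergent (u := a) (v := b) (by simpa using ha) (by simpa using hb)
  have hre : IntegrableOn
      (fun x : ℝ => ((x : ℂ) ^ ((a : ℂ) - 1) * (1 - (x : ℂ)) ^ ((b : ℂ) - 1)).re) (Ioc 0 1) :=
    hC.integrable.re
  refine (hre.mono_set Ioo_subset_Ioc_self).congr_fun (fun x hx => ?_) measurableSet_Ioo
  simp only [← ofReal_rpow_mul_one_sub_rpow (Ioo_subset_Icc_self hx), Complex.ofReal_re]

lemma integral_rpow_mul_one_sub_rpow (ha : 0 < a) (hb : 0 < b) :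
    ∫ x in (0 : ℝ)..1, x ^ (a - 1) * (1 - x) ^ (b - 1) = Gamma a * Gamma b / Gamma (a + b) := by
  apply Complex.ofReal_injective
  have hβ : Complex.betaIntegral a b
      = ((∫ x in (0 : ℝ)..1, x ^ (a - 1) * (1 - x) ^ (b - 1) : ℝ) : ℂ) := by
    rw [Complex.betaIntegral, ← intervalIntegral.integral_ofReal]
    refine intervalIntegral.integral_congr fun x hx => ?_
    rw [uIcc_of_le zero_le_one] at hx
    exact (ofReal_rpow_mul_one_sub_rpow hx).symm
  rw [← hβ, Complex.betaIntegral_eq_Gamma_mul_div _ _ (by simpa using ha) (by simpa using hb)]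
  push_cast [← Complex.Gamma_ofReal]
  rfl

lemma rpow_mul_one_add_rpow_neg_comp_div_one_sub {x : ℝ} (hx : x ∈ Ioo (0 : ℝ) 1) :
    |((1 - x) ^ 2)⁻¹| • ((x / (1 - x)) ^ (a - 1) * (1 + x / (1 - x)) ^ (-(a + b)))
      = x ^ (a - 1) * (1 - x) ^ (b - 1) := by
  obtain ⟨hx0, hx1⟩ := hx
  have hy : 0 < 1 - x := sub_pos.2 hx1
  have hsplit : (1 - x) ^ (a + b) = (1 - x) ^ (a - 1) * (1 - x) ^ (b - 1) * (1 - x) ^ 2 := by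
    rw [← rpow_add hy, ← rpow_natCast, ← rpow_add hy]
    ring_nf
  rw [show 1 + x / (1 - x) = (1 - x)⁻¹ by field_simp; ring, inv_rpow hy.le, rpow_neg hy.le,
    inv_inv, div_rpow hx0.le hy.le, hsplit, smul_eq_mul, abs_of_pos (by positivity)]
  field_simp

lemma integrableOn_rpow_mul_one_add_rpow_neg (ha : 0 < a) (hb : 0 < b) :
    IntegrableOn (fun v : ℝ => v ^ (a - 1) * (1 + v) ^ (-(a + b))) (Ioi 0) := by
  rw [← image_div_one_sub_Ioo, integrableOn_image_iff_integrableOn_abs_deriv_smul measurableSet_Ioo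
    (fun x hx => (hasDerivAt_div_one_sub hx.2.ne).hasDerivWithinAt)
    (injOn_div_one_sub.mono fun x hx => hx.2.ne)]
  exact (integrableOn_rpow_mul_one_sub_rpow ha hb).congr_fun
    (fun x hx => (rpow_mul_one_add_rpow_neg_comp_div_one_sub hx).symm) measurableSet_Ioo

lemma integral_rpow_mul_one_add_rpow_neg (ha : 0 < a) (hb : 0 < b) :
    ∫ v in Ioi 0, v ^ (a - 1) * (1 + v) ^ (-(a + b)) = Gamma a * Gamma b / Gamma (a + b) := by
  rw [← image_div_one_sub_Ioo, integral_image_eq_integral_abs_deriv_smul measurableSet_Ioo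
    (fun x hx => (hasDerivAt_div_one_sub hx.2.ne).hasDerivWithinAt)
    (injOn_div_one_sub.mono fun x hx => hx.2.ne),
    setIntegral_congr_fun measurableSet_Ioo fun x hx =>
      rpow_mul_one_add_rpow_neg_comp_div_one_sub hx,
    ← integral_Ioc_eq_integral_Ioo, ← intervalIntegral.integral_of_le zero_le_one]
  exact integral_rpow_mul_one_sub_rpow ha hb

end BetaIntegral

lemma one_sub_inv_one_add_pow_eq_sum {K : Type*} [Field K] {u : K} (hu : 1 + u ≠ 0) (n : ℕ) :
    1 - ((1 + u) ^ n)⁻¹ = ∑ k ∈ Finset.range n, u * ((1 + u) ^ (k + 1))⁻¹ := by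
  have hstep (k : ℕ) : u * ((1 + u) ^ (k + 1))⁻¹ = ((1 + u) ^ k)⁻¹ - ((1 + u) ^ (k + 1))⁻¹ := by
    field_simp
    ring
  simp_rw [hstep, Finset.sum_range_sub', pow_zero, inv_one]

lemma sum_range_Gamma_add_div_Gamma_add_one {δ : ℝ} (hδ : 0 < δ) {n : ℕ} (hn : 1 ≤ n) :
    ∑ k ∈ Finset.range n, Gamma (k + δ) / Gamma (k + 1) = Gamma (n + δ) / (δ * Gamma n) := by
  induction n, hn using Nat.le_induction with
  | base =>
    rw [Finset.sum_range_one, Nat.cast_zero, Nat.cast_one, zero_add, zero_add, add_comm 1 δ,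
      Gamma_add_one hδ.ne', Gamma_one]
    field_simp
  | succ n hn ih =>
    rw [Finset.sum_range_succ, ih, Nat.cast_succ, Gamma_add_one (by positivity),
      add_right_comm, Gamma_add_one (by positivity)]
    field_simp

lemma integral_one_sub_inv_one_add_pow_mul_rpow {δ : ℝ} (hδ0 : 0 < δ) (hδ1 : δ < 1) {n : ℕ}
    (hn : 1 ≤ n) :
    ∫ u in Ioi 0, (1 - ((1 + u) ^ n)⁻¹) * u ^ (-δ - 1)
      = Gamma (1 - δ) * Gamma (n + δ) / (δ * Gamma n) := by
  have hsum : ∀ u ∈ Ioi (0 : ℝ), (1 - ((1 + u) ^ n)⁻¹) * u ^ (-δ - 1)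
      = ∑ k ∈ Finset.range n, u ^ ((1 - δ) - 1) * (1 + u) ^ (-((1 - δ) + (k + δ))) := by
    intro u (hu : 0 < u)
    have hpow : u ^ ((1 - δ) - 1) = u * u ^ (-δ - 1) := by
      rw [← rpow_one_add' hu.le (by linarith)]
      ring_nf
    rw [one_sub_inv_one_add_pow_eq_sum (by positivity), Finset.sum_mul]
    refine Finset.sum_congr rfl fun k _ => ?_
    rw [hpow, show -((1 - δ) + (k + δ)) = -((k + 1 : ℕ) : ℝ) by push_cast; ring,
      rpow_neg (by positivity), rpow_natCast]
    ring
  rw [setIntegral_congr_fun measurableSet_Ioi hsum, integral_finsetSum _ fun k _ =>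
    integrableOn_rpow_mul_one_add_rpow_neg (sub_pos.2 hδ1) (by positivity),
    Finset.sum_congr rfl fun (k : ℕ) _ => integral_rpow_mul_one_add_rpow_neg (sub_pos.2 hδ1)
    (by positivity : (0 : ℝ) < k + δ)]
  simp_rw [sub_add_add_cancel, add_comm (1 : ℝ), mul_div_assoc, ← Finset.mul_sum,
    sum_range_Gamma_add_div_Gamma_add_one hδ0 hn]

lemma integral_Ioi_comp_mul_rpow_neg_mul (h : ℝ → ℝ) {α θ : ℝ} (hα : 0 < α) (hθ : 0 < θ) :
    ∫ t in Ioi 0, h (θ * t ^ (-α)) * t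
      = θ ^ (2 / α) / α * ∫ u in Ioi 0, h u * u ^ (-(2 / α) - 1) := by
  set δ := 2 / α
  have hαδ : α * δ = 2 := by simp only [δ]; field_simp
  have hjac : ∀ t ∈ Ioi (0 : ℝ),
      (|-α| * t ^ (-α - 1)) • (h (θ * t ^ (-α)) * (θ * t ^ (-α)) ^ (-δ - 1))
        = α * θ ^ (-δ - 1) * (h (θ * t ^ (-α)) * t) := by
    intro t (ht : 0 < t)
    have hexp : t ^ (-α - 1) * (t ^ (-α)) ^ (-δ - 1) = t := by
      rw [← rpow_mul ht.le, ← rpow_add ht,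
        show -α - 1 + -α * (-δ - 1) = 1 by linear_combination hαδ, rpow_one]
    rw [abs_neg, abs_of_pos hα, smul_eq_mul, mul_rpow hθ.le (by positivity)]
    calc _ = α * θ ^ (-δ - 1) * (h (θ * t ^ (-α)) * (t ^ (-α - 1) * (t ^ (-α)) ^ (-δ - 1))) := by
          ring
      _ = _ := by rw [hexp]
  have hsubst :=
    integral_comp_rpow_Ioi (fun y => h (θ * y) * (θ * y) ^ (-δ - 1)) (neg_ne_zero.2 hα.ne')
  rw [setIntegral_congr_fun measurableSet_Ioi hjac, integral_const_mul,
    integral_comp_mul_left_Ioi (fun u => h u * u ^ (-δ - 1)) 0 hθ, mul_zero, smul_eq_mul] at hsubst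
  rw [rpow_sub_one hθ.ne', rpow_neg hθ.le] at hsubst
  field_simp at hsubst ⊢
  linear_combination hsubst

lemma Gamma_one_sub_mul_Gamma_one_add {δ : ℝ} (hδ : δ ≠ 0) :
    Gamma (1 - δ) * Gamma (1 + δ) = π * δ / sin (π * δ) := by
  rw [add_comm, Gamma_add_one hδ, mul_left_comm, mul_comm (Gamma (1 - δ)), Gamma_mul_Gamma_one_sub]
  ring

theorem stmt17 (α θ : ℝ) (hα : 2 < α) (hθ : 0 < θ) (n : ℕ) (hn : 1 ≤ n)
    (δ : ℝ) (hδ : δ = 2 / α) :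
    2 * π * (∫ t in Set.Ioi (0:ℝ), (1 - ((1 + θ * t ^ (-α)) ^ n)⁻¹) * t)
      = θ ^ δ * ((π ^ 2 * δ / Real.sin (π * δ)) *
          (Real.Gamma (n + δ) / (Real.Gamma n * Real.Gamma (1 + δ)))) ∧
    θ ^ δ * ((π ^ 2 * δ / Real.sin (π * δ)) *
        (Real.Gamma (n + δ) / (Real.Gamma n * Real.Gamma (1 + δ))))
      = π * θ ^ δ * Real.Gamma (1 - δ) * Real.Gamma (n + δ) / Real.Gamma n := by
  have hα0 : 0 < α := by linarith
  have hδ0 : 0 < δ := by rw [hδ]; positivity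
  have hδ1 : δ < 1 := by rw [hδ, div_lt_one hα0]; exact hα
  have hαδ : α * δ = 2 := by rw [hδ]; field_simp
  have hreflect :
      θ ^ δ * ((π ^ 2 * δ / sin (π * δ)) * (Gamma (n + δ) / (Gamma n * Gamma (1 + δ))))
        = π * θ ^ δ * Gamma (1 - δ) * Gamma (n + δ) / Gamma n := by
    rw [sq, mul_assoc, mul_div_assoc, ← Gamma_one_sub_mul_Gamma_one_add hδ0.ne']
    field_simp
  refine ⟨?_, hreflect⟩
  rw [hreflect, integral_Ioi_comp_mul_rpow_neg_mul (fun u => 1 - ((1 + u) ^ n)⁻¹) hα0 hθ, ← hδ,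
    integral_one_sub_inv_one_add_pow_mul_rpow hδ0 hδ1 hn]
  field_simp
  rw [hαδ]
end
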